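/- Let n be odd, and let S = {a_1, ..., a_n} be a balanced multiset of nonnegative integers with at least two a_i positive. Then there exist nonnegative integers t_1, ..., t_n with t_i >= a_i for all i such that the nim-sum of t_1, ..., t_n is 0 and the nim-sum of (t_1 - a_1), ..., (t_n - a_n) is 0. -/

import Mathlib

/-!
Dividing by `2 ^ k` leaves a vector `b` with even coordinate sum (bit `k` of the nim-sum is the
parity of that sum) and an odd entry. Such a `b` is handled one bit at a time: writing
`t = 2 t' + τ` and `t - b = 2 s' + σ` with bit vectors `τ`, `σ` of even weight gives
`b = 2 (t' - s') + τ - σ`, so `c = t' - s'` rounds each `b i / 2` up or down. Rounding at one odd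
entry keeps `c` with an odd entry, rounding at a second one makes its sum even, and since `n` is
odd some entry of `b` is even, where `τ` and `σ` can both be flipped to make their weights even.
The coordinate sum decreases until all entries are at most `1`, and then `t = b` works.
-/

/-- The nim-sum (bitwise XOR) of a list of naturals. -/
def nimSum (l : List ℕ) : ℕ := l.foldr (· ^^^ ·) 0

open Finset

lemma nimSum_cons (x : ℕ) (l : List ℕ) : nimSum (x :: l) = x ^^^ nimSum l := rfl

lemma nimSum_mod_two (l : List ℕ) : nimSum l % 2 = l.sum % 2 := by
  induction l with
  | nil => rfl
  | cons x l ih =>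
    rw [nimSum_cons, List.sum_cons, Nat.xor_mod_two_eq, Nat.add_mod, ih, ← Nat.add_mod]

lemma two_mul_add_xor_two_mul_add {x y τ σ : ℕ} (hτ : τ ≤ 1) (hσ : σ ≤ 1) :
    (2 * x + τ) ^^^ (2 * y + σ) = 2 * (x ^^^ y) + (τ + σ) % 2 := by
  have hdiv : ((2 * x + τ) ^^^ (2 * y + σ)) / 2 = x ^^^ y := by
    rw [Nat.xor_div_two]
    congr 1 <;> omega
  have hmod := Nat.xor_mod_two_eq (m := 2 * x + τ) (n := 2 * y + σ)
  omega

lemma nimSum_ofFn_two_mul_add {n : ℕ} (u τ : Fin n → ℕ) (hτ : ∀ i, τ i ≤ 1) :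
    nimSum (List.ofFn fun i => 2 * u i + τ i) = 2 * nimSum (List.ofFn u) + (∑ i, τ i) % 2 := by
  induction n with
  | zero => rfl
  | succ n ih =>
    rw [List.ofFn_succ, List.ofFn_succ, nimSum_cons, nimSum_cons, Fin.sum_univ_succ,
      ih (fun i => u i.succ) (fun i => τ i.succ) (fun i => hτ i.succ),
      two_mul_add_xor_two_mul_add (hτ 0) (Nat.le_of_lt_succ (Nat.mod_lt _ two_pos)),
      Nat.add_mod_mod]

lemma nimSum_ofFn_zero (n : ℕ) : nimSum (List.ofFn fun _ : Fin n => 0) = 0 := by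
  induction n with
  | zero => rfl
  | succ n ih => rw [List.ofFn_succ, nimSum_cons, ih, Nat.zero_xor]

lemma nimSum_ofFn_eq_zero_of_le_one {n : ℕ} {τ : Fin n → ℕ} (hτ : ∀ i, τ i ≤ 1)
    (he : Even (∑ i, τ i)) : nimSum (List.ofFn τ) = 0 := by
  have h := nimSum_ofFn_two_mul_add (fun _ => 0) τ hτ
  rw [nimSum_ofFn_zero, Nat.even_iff.mp he] at h
  simpa using h

lemma nimSum_ofFn_two_pow_mul (k : ℕ) {n : ℕ} (u : Fin n → ℕ) :
    nimSum (List.ofFn fun i => 2 ^ k * u i) = 2 ^ k * nimSum (List.ofFn u) := by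
  induction k with
  | zero => simp
  | succ k ih =>
    have h := nimSum_ofFn_two_mul_add (fun i => 2 ^ k * u i) 0 (fun _ => zero_le_one)
    simp only [Pi.zero_apply, add_zero, sum_const_zero, Nat.zero_mod] at h
    simp only [pow_succ', mul_assoc, h, ih]

lemma exists_even_of_even_sum {n : ℕ} (hn : Odd n) {b : Fin n → ℕ} (he : Even (∑ i, b i)) :
    ∃ z, Even (b z) := by
  by_contra! h
  simp only [Nat.not_even_iff_odd] at h
  rw [even_sum_iff_even_card_odd] at he
  simp only [h, filter_true, card_univ, Fintype.card_fin] at he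
  exact Nat.not_even_iff_odd.mpr hn he

lemma exists_ne_odd_of_even_sum {n : ℕ} {b : Fin n → ℕ} (he : Even (∑ i, b i)) {p : Fin n}
    (hp : Odd (b p)) : ∃ q ≠ p, Odd (b q) := by
  rw [even_sum_iff_even_card_odd] at he
  have hcard : 1 < #{i | Odd (b i)} := by
    have : 0 < #{i | Odd (b i)} := card_pos.mpr ⟨p, by simpa using hp⟩
    obtain ⟨m, hm⟩ := he
    omega
  obtain ⟨q, hq, hqp⟩ := exists_mem_ne hcard p
  exact ⟨q, hqp, by simpa using hq⟩

def IsNimDifference {n : ℕ} (b : Fin n → ℕ) : Prop :=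
  ∃ t : Fin n → ℕ, (∀ i, b i ≤ t i) ∧ nimSum (List.ofFn t) = 0 ∧
    nimSum (List.ofFn fun i => t i - b i) = 0

namespace IsNimDifference

variable {n : ℕ} {b : Fin n → ℕ}

lemma of_le_one (hb : ∀ i, b i ≤ 1) (he : Even (∑ i, b i)) : IsNimDifference b := by
  refine ⟨b, fun _ => le_rfl, nimSum_ofFn_eq_zero_of_le_one hb he, ?_⟩
  simpa only [Nat.sub_self] using nimSum_ofFn_zero n

lemma two_pow_mul (hb : IsNimDifference b) (k : ℕ) : IsNimDifference fun i => 2 ^ k * b i := by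
  obtain ⟨t, hle, ht, hd⟩ := hb
  refine ⟨fun i => 2 ^ k * t i, fun i => Nat.mul_le_mul_left _ (hle i), ?_, ?_⟩
  · rw [nimSum_ofFn_two_pow_mul, ht, mul_zero]
  · simp only [← Nat.mul_sub]
    rw [nimSum_ofFn_two_pow_mul, hd, mul_zero]

lemma of_two_mul_add {c τ σ : Fin n → ℕ} (hc : IsNimDifference c) (hτ : ∀ i, τ i ≤ 1)
    (hσ : ∀ i, σ i ≤ 1) (hτe : Even (∑ i, τ i)) (hσe : Even (∑ i, σ i))
    (hb : ∀ i, b i + σ i = 2 * c i + τ i) : IsNimDifference b := by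
  obtain ⟨t, hle, ht, hd⟩ := hc
  have hsub : ∀ i, 2 * t i + τ i - b i = 2 * (t i - c i) + σ i := fun i => by
    have := hb i; have := hle i; omega
  refine ⟨fun i => 2 * t i + τ i, fun i => ?_, ?_, ?_⟩
  · have := hb i; have := hle i
    show b i ≤ 2 * t i + τ i
    omega
  · rw [nimSum_ofFn_two_mul_add t τ hτ, ht, Nat.even_iff.mp hτe]
  · simp only [hsub]
    rw [nimSum_ofFn_two_mul_add _ σ hσ, hd, Nat.even_iff.mp hσe]

lemma of_half_add (hn : Odd n) (he : Even (∑ i, b i)) {r : Fin n → ℕ}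
    (hr : ∀ i, r i ≤ b i % 2) (h : IsNimDifference fun i => b i / 2 + r i) :
    IsNimDifference b := by
  obtain ⟨z, hz⟩ := exists_even_of_even_sum hn he
  rw [Nat.even_iff] at hz
  set e := (∑ i, (b i % 2 - r i)) % 2
  have hbits : ∀ i, b i % 2 - r i + (if i = z then e else 0) ≤ 1 ∧
      r i + (if i = z then e else 0) ≤ 1 := fun i => by
    have := hr i
    split_ifs with hi
    · subst hi; omega
    · omega
  -- `∑ i, (b i % 2 - r i)` and `∑ i, r i` both have parity `e`: they add up to an even number
  have hdecomp : ∑ i, (b i % 2 - r i) + ∑ i, r i = ∑ i, b i % 2 := by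
    rw [← sum_add_distrib]
    exact sum_congr rfl fun i _ => Nat.sub_add_cancel (hr i)
  have hpar : (∑ i, b i % 2) % 2 = 0 := by
    rw [← sum_nat_mod, Nat.even_iff.mp he]
  refine h.of_two_mul_add (fun i => (hbits i).1) (fun i => (hbits i).2) ?_ ?_ fun i => ?_
  · rw [sum_add_distrib, sum_ite_eq']
    simp only [mem_univ, if_true, Nat.even_iff]
    omega
  · rw [sum_add_distrib, sum_ite_eq']
    simp only [mem_univ, if_true, Nat.even_iff]
    omega
  · have := hr i
    have := Nat.div_add_mod (b i) 2
    omega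

end IsNimDifference

lemma exists_half_add_odd {n : ℕ} {b : Fin n → ℕ} (he : Even (∑ i, b i)) {p : Fin n}
    (hp : Odd (b p)) : ∃ r : Fin n → ℕ, (∀ i, r i ≤ b i % 2) ∧
      Even (∑ i, (b i / 2 + r i)) ∧ Odd (b p / 2 + r p) := by
  obtain ⟨q, hqp, hq⟩ := exists_ne_odd_of_even_sum he hp
  rw [Nat.odd_iff] at hp hq
  set α := 1 - b p / 2 % 2
  set β := (∑ i, b i / 2 + α) % 2
  refine ⟨fun i => (if i = p then α else 0) + (if i = q then β else 0), fun i => ?_, ?_, ?_⟩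
  · show (if i = p then α else 0) + (if i = q then β else 0) ≤ b i % 2
    split_ifs with hip hiq hiq
    · exact absurd (hip ▸ hiq) hqp.symm
    · subst hip; omega
    · subst hiq; omega
    · omega
  · simp only [sum_add_distrib, sum_ite_eq', mem_univ, if_true, Nat.even_iff]
    omega
  · simp only [if_true, if_neg hqp.symm, Nat.odd_iff]
    omega

lemma sum_half_add_lt_sum {n : ℕ} {b r : Fin n → ℕ} (hr : ∀ i, r i ≤ b i % 2) {j : Fin n}
    (hj : 1 < b j) : ∑ i, (b i / 2 + r i) < ∑ i, b i :=
  sum_lt_sum (fun i _ => by have := hr i; omega) ⟨j, mem_univ j, by have := hr j; omega⟩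

theorem isNimDifference_of_even_sum {n : ℕ} (hn : Odd n) (b : Fin n → ℕ)
    (he : Even (∑ i, b i)) (hodd : ∃ p, Odd (b p)) : IsNimDifference b := by
  induction hs : ∑ i, b i using Nat.strong_induction_on generalizing b with
  | _ s ih =>
  by_cases hsmall : ∀ i, b i ≤ 1
  · exact .of_le_one hsmall he
  push Not at hsmall
  obtain ⟨j, hj⟩ := hsmall
  obtain ⟨p, hp⟩ := hodd
  obtain ⟨r, hr, he', hp'⟩ := exists_half_add_odd he hp
  exact .of_half_add hn he hr (ih _ (hs ▸ sum_half_add_lt_sum hr hj) _ he' ⟨p, hp'⟩ rfl)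

theorem stmt10_general (n : ℕ) (hodd : Odd n) (a : Fin n → ℕ)
    (k : ℕ) (hk : ∀ i, 2 ^ k ∣ a i) (hkmax : ¬ ∀ i, 2 ^ (k + 1) ∣ a i)
    (hbal : (nimSum (List.ofFn a)).testBit k = false) :
    ∃ t : Fin n → ℕ, (∀ i, a i ≤ t i) ∧
      nimSum (List.ofFn t) = 0 ∧
      nimSum (List.ofFn fun i => t i - a i) = 0 := by
  obtain ⟨b, rfl⟩ : ∃ b : Fin n → ℕ, a = fun i => 2 ^ k * b i :=
    ⟨fun i => a i / 2 ^ k, funext fun i => (Nat.mul_div_cancel' (hk i)).symm⟩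
  have he : Even (∑ i, b i) := by
    rw [nimSum_ofFn_two_pow_mul, Nat.testBit_two_pow_mul, Nat.sub_self,
      Nat.testBit_zero] at hbal
    rw [Nat.even_iff, ← List.sum_ofFn, ← nimSum_mod_two]
    simpa using hbal
  have hodd_entry : ∃ p, Odd (b p) := by
    push Not at hkmax
    obtain ⟨p, hp⟩ := hkmax
    rw [pow_succ, Nat.mul_dvd_mul_iff_left (by positivity), ← even_iff_two_dvd,
      Nat.not_even_iff_odd] at hp
    exact ⟨p, hp⟩
  exact (isNimDifference_of_even_sum hodd b he hodd_entry).two_pow_mul k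

theorem stmt10 (n : ℕ) (hodd : Odd n) (a : Fin n → ℕ)
    (hpos : ∃ i j, i ≠ j ∧ 0 < a i ∧ 0 < a j)
    (k : ℕ) (hk : ∀ i, 2 ^ k ∣ a i) (hkmax : ¬ ∀ i, 2 ^ (k + 1) ∣ a i)
    (hbal : (nimSum (List.ofFn a)).testBit k = false) :
    ∃ t : Fin n → ℕ, (∀ i, a i ≤ t i) ∧
      nimSum (List.ofFn t) = 0 ∧
      nimSum (List.ofFn fun i => t i - a i) = 0 :=
  stmt10_general n hodd a k hk hkmax hbal
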